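/- Fix a finite nonempty state space S, horizon H ≥ 1, finite nonempty action sets A₁, A₂ with A = A₁ × A₂, a deterministic target policy π†, and b > 0. Let R̂ be the constructed rewards: R̂_h(s, π†_h(s)) = 0; R̂_h(s, (π†_{1,h}(s), a₂)) = −b for a₂ ≠ π†_{2,h}(s); R̂_h(s, (a₁, π†_{2,h}(s))) = b for a₁ ≠ π†_{1,h}(s); and R̂_h(s, (a₁, a₂)) = 0 for a₁ ≠ π†_{1,h}(s), a₂ ≠ π†_{2,h}(s). Then for any transition kernels P_h : S × A → Δ(S), the induced Q function Q̂ satisfies Q̂_h(s, a) = R̂_h(s, a) for all h ∈ [H], s ∈ S, a ∈ A, the minimax value val(Q̂_h(s, ·)) = 0 for every h and s, and π†_h(s) is a strict Nash equilibrium of every stage game (A, Q̂_h(s, ·)) with gap b, i.e., Q̂ ∈ U̲(π†; b). -/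
import Mathlib


open Finset

/-- A mixed strategy: nonnegative weights summing to one. -/
def IsMixed {α : Type*} [Fintype α] (p : α → ℝ) : Prop :=
  (∀ a, 0 ≤ p a) ∧ ∑ a, p a = 1

/-- The point-mass distribution at `a`. -/
def pmass {α : Type*} [DecidableEq α] (a : α) : α → ℝ :=
  fun x => if x = a then 1 else 0

/-- Expected reward of a mixed strategy profile `(p, q)` in the game with reward `R`. -/
def expR {A₁ A₂ : Type*} [Fintype A₁] [Fintype A₂]
    (R : A₁ × A₂ → ℝ) (p : A₁ → ℝ) (q : A₂ → ℝ) : ℝ :=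
  ∑ a₁, ∑ a₂, p a₁ * q a₂ * R (a₁, a₂)

/-- `(p, q)` is a (mixed) Nash equilibrium of the zero-sum game with reward `R`
(player 1 minimizes `R`, player 2 maximizes `R`). -/
def IsNE {A₁ A₂ : Type*} [Fintype A₁] [Fintype A₂] [DecidableEq A₁] [DecidableEq A₂]
    (R : A₁ × A₂ → ℝ) (p : A₁ → ℝ) (q : A₂ → ℝ) : Prop :=
  IsMixed p ∧ IsMixed q ∧
  (∀ a₂, expR R p (pmass a₂) ≤ expR R p q) ∧
  (∀ a₁, expR R p q ≤ expR R (pmass a₁) q)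

/-- The set of all mixed Nash equilibria of the game with reward `R`. -/
def NESet {A₁ A₂ : Type*} [Fintype A₁] [Fintype A₂] [DecidableEq A₁] [DecidableEq A₂]
    (R : A₁ × A₂ → ℝ) : Set ((A₁ → ℝ) × (A₂ → ℝ)) :=
  {pq | IsNE R pq.1 pq.2}

/-- The pure strategy profile `π` is a strict Nash equilibrium of the game with reward `R`. -/
def IsStrictNE {A₁ A₂ : Type*} (R : A₁ × A₂ → ℝ) (π : A₁ × A₂) : Prop :=
  (∀ a₂, a₂ ≠ π.2 → R (π.1, a₂) < R π) ∧
  (∀ a₁, a₁ ≠ π.1 → R π < R (a₁, π.2))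

/-- The minimax value of a finite two-player zero-sum game:
`val(G) = inf_{p ∈ Δ(A₁)} sup_{q ∈ Δ(A₂)} G((p, q))`. -/
noncomputable def gameValue {A₁ A₂ : Type*} [Fintype A₁] [Fintype A₂]
    (G : A₁ × A₂ → ℝ) : ℝ :=
  sInf {v | ∃ p, IsMixed p ∧ v = sSup {w | ∃ q, IsMixed q ∧ w = expR G p q}}

/-- The Q function induced by transition kernels `P` and rewards `R` over horizon `H`
via backward recursion: `Q H = 0` beyond the horizon, and for `h < H`,
`Q h s a = R h s a + Σ_{s'} P h s a s' · val(Q (h+1) s' ·)`.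
Periods are indexed `0, 1, …, H - 1`. -/
noncomputable def inducedQ {S A₁ A₂ : Type*} [Fintype S] [Fintype A₁] [Fintype A₂]
    (H : ℕ) (P : ℕ → S → A₁ × A₂ → S → ℝ) (R : ℕ → S → A₁ × A₂ → ℝ) :
    ℕ → S → A₁ × A₂ → ℝ :=
  fun h =>
    if _hh : h < H then
      fun s a => R h s a + ∑ s', P h s a s' * gameValue (inducedQ H P R (h + 1) s')
    else fun _ _ => 0
  termination_by h => H - h
  decreasing_by omega

lemma pmass_mixed {α : Type*} [Fintype α] [DecidableEq α] (a : α) : IsMixed (pmass a) := by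
  constructor
  · intro x; unfold pmass; split <;> norm_num
  · simp [pmass]

lemma expR_pmass_left {A₁ A₂ : Type*} [Fintype A₁] [Fintype A₂] [DecidableEq A₁]
    (G : A₁ × A₂ → ℝ) (x : A₁) (q : A₂ → ℝ) :
    expR G (pmass x) q = ∑ a₂, q a₂ * G (x, a₂) := by
  simp [expR, pmass, ite_mul]

lemma expR_pmass_right {A₁ A₂ : Type*} [Fintype A₁] [Fintype A₂] [DecidableEq A₂]
    (G : A₁ × A₂ → ℝ) (y : A₂) (p : A₁ → ℝ) :
    expR G p (pmass y) = ∑ a₁, p a₁ * G (a₁, y) := by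
  simp [expR, pmass, mul_ite]

lemma expR_le_bound {A₁ A₂ : Type*} [Fintype A₁] [Fintype A₂] [Nonempty A₁] [Nonempty A₂]
    (G : A₁ × A₂ → ℝ) (p : A₁ → ℝ) (q : A₂ → ℝ) (hp : IsMixed p) (hq : IsMixed q) :
    expR G p q ≤ Finset.univ.sup' Finset.univ_nonempty G := by
  set C := Finset.univ.sup' Finset.univ_nonempty G with hC
  calc expR G p q ≤ ∑ a₁, ∑ a₂, p a₁ * q a₂ * C := by
        apply Finset.sum_le_sum; intro a₁ _; apply Finset.sum_le_sum; intro a₂ _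
        exact mul_le_mul_of_nonneg_left (Finset.le_sup' G (Finset.mem_univ _))
          (mul_nonneg (hp.1 a₁) (hq.1 a₂))
    _ = (∑ a₁, p a₁) * (∑ a₂, q a₂) * C := by
        rw [Finset.sum_mul, Finset.sum_mul]
        apply Finset.sum_congr rfl; intro a₁ _
        rw [Finset.mul_sum, Finset.sum_mul]
    _ = C := by rw [hp.2, hq.2]; ring

lemma gameValue_eq_zero {A₁ A₂ : Type*} [Fintype A₁] [Fintype A₂]
    [DecidableEq A₁] [DecidableEq A₂] [Nonempty A₁] [Nonempty A₂]
    (G : A₁ × A₂ → ℝ) (x : A₁) (y : A₂)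
    (h1 : ∀ q, IsMixed q → expR G (pmass x) q ≤ 0)
    (h2 : ∀ p, IsMixed p → 0 ≤ expR G p (pmass y)) : gameValue G = 0 := by
  have hxy : expR G (pmass x) (pmass y) = 0 :=
    le_antisymm (h1 _ (pmass_mixed y)) (h2 _ (pmass_mixed x))
  have hsup : sSup {w | ∃ q, IsMixed q ∧ w = expR G (pmass x) q} = 0 := by
    apply le_antisymm
    · refine csSup_le ⟨0, ⟨pmass y, pmass_mixed y, hxy.symm⟩⟩ ?_
      rintro w ⟨q, hq, rfl⟩; exact h1 q hq
    · refine le_csSup ⟨0, ?_⟩ ⟨pmass y, pmass_mixed y, hxy.symm⟩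
      rintro w ⟨q, hq, rfl⟩; exact h1 q hq
  have h0mem : (0 : ℝ) ∈ {v | ∃ p, IsMixed p ∧ v = sSup {w | ∃ q, IsMixed q ∧ w = expR G p q}} :=
    ⟨pmass x, pmass_mixed x, hsup.symm⟩
  have hlb : ∀ v ∈ {v | ∃ p, IsMixed p ∧ v = sSup {w | ∃ q, IsMixed q ∧ w = expR G p q}},
      (0 : ℝ) ≤ v := by
    rintro v ⟨p, hp, rfl⟩
    refine le_trans (h2 p hp) (le_csSup ⟨Finset.univ.sup' Finset.univ_nonempty G, ?_⟩
      ⟨pmass y, pmass_mixed y, rfl⟩)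
    rintro w ⟨q, hq, rfl⟩; exact expR_le_bound G p q hp hq
  exact le_antisymm (csInf_le ⟨0, hlb⟩ h0mem) (le_csInf ⟨0, h0mem⟩ hlb)

lemma gameValue_zero_fun {A₁ A₂ : Type*} [Fintype A₁] [Fintype A₂]
    [DecidableEq A₁] [DecidableEq A₂] [Nonempty A₁] [Nonempty A₂] :
    gameValue (fun _ : A₁ × A₂ => (0 : ℝ)) = 0 := by
  apply gameValue_eq_zero _ (Classical.arbitrary A₁) (Classical.arbitrary A₂) <;>
    intro r hr <;> simp [expR]

/-- For the constructed rewards `R̂` (value `0` at the target profile, `-b` on the rest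
of the target row, `b` on the rest of the target column, `0` elsewhere, in every period
and state) and arbitrary transition kernels `P`, the induced Q function coincides with
`R̂`, every stage game has minimax value `0`, and the target policy is a strict Nash
equilibrium of every stage game with gap `b`, i.e. `Q̂ ∈ U̲(π†; b)`. -/
theorem constructed_rewards_inducedQ {S A₁ A₂ : Type*} [Fintype S] [Nonempty S]
    [Fintype A₁] [Fintype A₂] [DecidableEq A₁] [DecidableEq A₂] [Nonempty A₁] [Nonempty A₂]
    (H : ℕ) (hH : 1 ≤ H) (πd : ℕ → S → A₁ × A₂) (b : ℝ) (hb : 0 < b)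
    (P : ℕ → S → A₁ × A₂ → S → ℝ)
    (hP : ∀ h < H, ∀ s a, (∀ s', 0 ≤ P h s a s') ∧ ∑ s', P h s a s' = 1)
    (Rhat : ℕ → S → A₁ × A₂ → ℝ)
    (hRhat : ∀ h < H, ∀ s, Rhat h s = fun a =>
      if a = πd h s then 0
      else if a.1 = (πd h s).1 then -b
      else if a.2 = (πd h s).2 then b
      else 0) :
    (∀ h < H, ∀ s a, inducedQ H P Rhat h s a = Rhat h s a) ∧
    (∀ h < H, ∀ s, gameValue (inducedQ H P Rhat h s) = 0) ∧
    (∀ h < H, ∀ s,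
      (∀ a₂, a₂ ≠ (πd h s).2 →
        inducedQ H P Rhat h s ((πd h s).1, a₂) + b ≤ inducedQ H P Rhat h s (πd h s)) ∧
      (∀ a₁, a₁ ≠ (πd h s).1 →
        inducedQ H P Rhat h s (πd h s) ≤ inducedQ H P Rhat h s (a₁, (πd h s).2) - b)) := by
  -- the stage game value of Rhat is 0
  have hval : ∀ h < H, ∀ s, gameValue (Rhat h s) = 0 := by
    intro h hh s
    apply gameValue_eq_zero _ (πd h s).1 (πd h s).2
    · intro q hq
      rw [expR_pmass_left, hRhat h hh s]
      apply Finset.sum_nonpos; intro a₂ _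
      by_cases ha : a₂ = (πd h s).2
      · simp [ha]
      · have hne : ((πd h s).1, a₂) ≠ πd h s := by
          simp [Prod.ext_iff, ha]
        beta_reduce
        rw [if_neg hne, if_pos rfl]
        have := hq.1 a₂
        nlinarith
    · intro p hp
      rw [expR_pmass_right, hRhat h hh s]
      apply Finset.sum_nonneg; intro a₁ _
      by_cases ha : a₁ = (πd h s).1
      · simp [ha]
      · have hne : (a₁, (πd h s).2) ≠ πd h s := by
          simp [Prod.ext_iff, ha]
        beta_reduce
        rw [if_neg hne, if_neg ha, if_pos rfl]
        have := hp.1 a₁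
        nlinarith
  have baseQ : ∀ h, H ≤ h → ∀ s a, inducedQ H P Rhat h s a = 0 := by
    intro h hh s a
    rw [inducedQ, dif_neg (by omega)]
  have key : ∀ n h, H - h ≤ n → ∀ s,
      (h < H → ∀ a, inducedQ H P Rhat h s a = Rhat h s a) ∧
      gameValue (inducedQ H P Rhat h s) = 0 := by
    intro n
    induction n with
    | zero =>
      intro h hh s
      have hge : H ≤ h := by omega
      have hQ : inducedQ H P Rhat h s = fun _ => 0 := funext (baseQ h hge s)
      exact ⟨fun hlt => absurd hlt (by omega), by rw [hQ]; exact gameValue_zero_fun⟩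
    | succ n ih =>
      intro h hh s
      by_cases hlt : h < H
      · have hQ : ∀ a, inducedQ H P Rhat h s a = Rhat h s a := by
          intro a
          rw [inducedQ, dif_pos hlt]
          have hz : ∀ s', gameValue (inducedQ H P Rhat (h + 1) s') = 0 :=
            fun s' => (ih (h + 1) (by omega) s').2
          simp [hz]
        refine ⟨fun _ => hQ, ?_⟩
        rw [show inducedQ H P Rhat h s = Rhat h s from funext hQ]
        exact hval h hlt s
      · have hQ : inducedQ H P Rhat h s = fun _ => 0 := funext (baseQ h (by omega) s)
        exact ⟨fun h' => absurd h' hlt, by rw [hQ]; exact gameValue_zero_fun⟩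
  have hQR : ∀ h < H, ∀ s a, inducedQ H P Rhat h s a = Rhat h s a :=
    fun h hh s => (key H h (by omega) s).1 hh
  refine ⟨hQR, fun h hh s => (key H h (by omega) s).2, ?_⟩
  intro h hh s
  constructor
  · intro a₂ ha
    rw [hQR h hh s, hQR h hh s, hRhat h hh s]
    have hne : ((πd h s).1, a₂) ≠ πd h s := by simp [Prod.ext_iff, ha]
    simp [hne]
  · intro a₁ ha
    rw [hQR h hh s, hQR h hh s, hRhat h hh s]
    have hne : (a₁, (πd h s).2) ≠ πd h s := by simp [Prod.ext_iff, ha]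
    simp [hne, ha]
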